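/- Cone replacement lemma. Let A₁, A₂, B₁, B₂ be cochain complexes over an additive category 𝒜 with binary biproducts, let (F₁ : A₁ → B₁, G₁ : B₁ → A₁) and (F₂ : A₂ → B₂, G₂ : B₂ → A₂) be homotopy equivalences, and let f : A₁ → A₂ be a chain map. Then the chain map g := F₂ ∘ f ∘ G₁ : B₁ → B₂ has the property that the mapping cone of f is homotopy equivalent to the mapping cone of g. -/

import Mathlib

/-!
When `𝒜` has a zero object, the homotopy category of `𝒜` is pretriangulated and mapping cone
triangles are distinguished. The homotopy equivalences `e₁`, `e₂` give isomorphisms there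
which commute with `f` and `g`, because `e₁.hom ≫ g = e₁.hom ≫ e₁.inv ≫ f ≫ e₂.hom` is
homotopic to `f ≫ e₂.hom`; so they extend to an isomorphism of the two cone triangles, and
its third component is a homotopy equivalence of cones.

In general, `𝒜` embeds fully faithfully and additively into its matrix category `Mat_ 𝒜`, which
has a zero object. The embedding commutes with mapping cones and, being fully faithful on
homotopy categories, reflects homotopy equivalences.
-/

open CategoryTheory CategoryTheory.Limits

namespace CategoryTheory.Functor

variable {V W : Type*} [Category V] [Category W] [Preadditive V] [Preadditive W]
  {ι : Type*} {c : ComplexShape ι}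

noncomputable def preimageHomotopyEquiv (F : V ⥤ W) [F.Additive] [F.Full] [F.Faithful]
    {K L : HomologicalComplex V c}
    (e : HomotopyEquiv ((F.mapHomologicalComplex c).obj K) ((F.mapHomologicalComplex c).obj L)) :
    HomotopyEquiv K L :=
  HomotopyCategory.homotopyEquivOfIso <|
    (F.mapHomotopyCategory c).preimageIso (HomotopyCategory.isoOfHomotopyEquiv e)

end CategoryTheory.Functor

namespace CochainComplex.mappingCone

variable {C : Type*} [Category C] [Preadditive C] [HasBinaryBiproducts C]
  {A₁ A₂ B₁ B₂ : CochainComplex C ℤ}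

noncomputable def homotopyEquivOfHomotopyCommSqOfHasZeroObject [HasZeroObject C]
    (e₁ : HomotopyEquiv A₁ B₁) (e₂ : HomotopyEquiv A₂ B₂) {f : A₁ ⟶ A₂} {g : B₁ ⟶ B₂}
    (H : Homotopy (f ≫ e₂.hom) (e₁.hom ≫ g)) :
    HomotopyEquiv (mappingCone f) (mappingCone g) := by
  have comm : (triangleh f).mor₁ ≫ (HomotopyCategory.isoOfHomotopyEquiv e₂).hom =
      (HomotopyCategory.isoOfHomotopyEquiv e₁).hom ≫ (triangleh g).mor₁ := by
    change (HomotopyCategory.quotient _ _).map f ≫ (HomotopyCategory.quotient _ _).map e₂.hom =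
      (HomotopyCategory.quotient _ _).map e₁.hom ≫ (HomotopyCategory.quotient _ _).map g
    rw [← Functor.map_comp, ← Functor.map_comp]
    exact HomotopyCategory.eq_of_homotopy _ _ H
  exact HomotopyCategory.homotopyEquivOfIso <| Pretriangulated.Triangle.π₃.mapIso <|
    Pretriangulated.isoTriangleOfIso₁₂ _ _
      (HomotopyCategory.mappingCone_triangleh_distinguished f)
      (HomotopyCategory.mappingCone_triangleh_distinguished g)
      (HomotopyCategory.isoOfHomotopyEquiv e₁) (HomotopyCategory.isoOfHomotopyEquiv e₂) comm

noncomputable def homotopyEquivOfHomotopyCommSq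
    (e₁ : HomotopyEquiv A₁ B₁) (e₂ : HomotopyEquiv A₂ B₂) {f : A₁ ⟶ A₂} {g : B₁ ⟶ B₂}
    (H : Homotopy (f ≫ e₂.hom) (e₁.hom ≫ g)) :
    HomotopyEquiv (mappingCone f) (mappingCone g) :=
  have : HasBinaryBiproducts (Mat_ C) := hasBinaryBiproducts_of_finite_biproducts _
  let F := Mat_.embedding C
  let Φ := F.mapHomologicalComplex (ComplexShape.up ℤ)
  have HΦ : Homotopy (Φ.map f ≫ Φ.map e₂.hom) (Φ.map e₁.hom ≫ Φ.map g) :=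
    (Homotopy.ofEq (Φ.map_comp f e₂.hom).symm).trans <|
      (F.mapHomotopy H).trans (Homotopy.ofEq (Φ.map_comp e₁.hom g))
  F.preimageHomotopyEquiv <| (HomotopyEquiv.ofIso (mapHomologicalComplexIso f F)).trans <|
    (homotopyEquivOfHomotopyCommSqOfHasZeroObject
      (F.mapHomotopyEquiv e₁) (F.mapHomotopyEquiv e₂) HΦ).trans
      (HomotopyEquiv.ofIso (mapHomologicalComplexIso g F).symm)

end CochainComplex.mappingCone

/-- **Statement 12** (Cone replacement lemma). Let `A₁, A₂, B₁, B₂` be cochain complexes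
over an additive category `𝒜` with binary biproducts, let `e₁ : A₁ ≃ B₁` and
`e₂ : A₂ ≃ B₂` be homotopy equivalences and `f : A₁ ⟶ A₂` a chain map. Then the mapping
cone of `f` is homotopy equivalent to the mapping cone of
`g = F₂ ∘ f ∘ G₁ = e₁.inv ≫ f ≫ e₂.hom : B₁ ⟶ B₂`. -/
theorem cone_replacement {𝒜 : Type*} [Category 𝒜] [Preadditive 𝒜]
    [HasBinaryBiproducts 𝒜] {A₁ A₂ B₁ B₂ : CochainComplex 𝒜 ℤ}
    (e₁ : HomotopyEquiv A₁ B₁) (e₂ : HomotopyEquiv A₂ B₂) (f : A₁ ⟶ A₂) :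
    Nonempty (HomotopyEquiv (CochainComplex.mappingCone f)
      (CochainComplex.mappingCone (e₁.inv ≫ f ≫ e₂.hom))) := by
  have H : Homotopy (f ≫ e₂.hom) (e₁.hom ≫ e₁.inv ≫ f ≫ e₂.hom) :=
    (Homotopy.ofEq (Category.id_comp _).symm).trans <|
      (e₁.homotopyHomInvId.compRight (f ≫ e₂.hom)).symm.trans
        (Homotopy.ofEq (Category.assoc _ _ _))
  exact ⟨CochainComplex.mappingCone.homotopyEquivOfHomotopyCommSq e₁ e₂ H⟩
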